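/- arXiv:2410.20729 — 2 statements merged into one kernel-verified Lean document; each statement's English description precedes it below -/
import Mathlib

section
/- Let p be a prime, n ≥ 1, and A an abelian group with p^n·a = 0 for all a ∈ A. Let {m_i}_{i∈I} be a family of elements of the free abelian group M = ⊕_{j∈J} ℤ·x_j whose images in M/pM are linearly independent over ℤ/p. Then for any family {a_i}_{i∈I} in A there exists a group homomorphism f : M → A with f(m_i) = a_i for all i. -/
/-- Reduction modulo `q` of an element of the free abelian group `J →₀ ℤ`. -/
noncomputable def modRed (q : ℕ) {J : Type*} (v : J →₀ ℤ) : J →₀ ZMod q :=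
  Finsupp.mapRange (Int.cast : ℤ → ZMod q) (by simp) v

/-!
Modulo `p` the system is a linearly independent system over the field `ZMod p`, so it is solvable
in any group of exponent `p`. Solvability passes from `H` and `A ⧸ H` to `A`, because a solution in
`A ⧸ H` lifts along the projection (`J →₀ ℤ` is free) and its defect is then corrected by a solution
in `H`. Taking for `H` the `p`-torsion of `A` gives the induction on the exponent `p ^ n`.
-/

theorem LinearIndependent.exists_linearMap_apply_eq {K V W ι : Type*} [DivisionRing K]
    [AddCommGroup V] [Module K V] [AddCommGroup W] [Module K W] {v : ι → V}
    (hv : LinearIndependent K v) (w : ι → W) : ∃ f : V →ₗ[K] W, ∀ i, f (v i) = w i := by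
  obtain ⟨g, hg⟩ := (Finsupp.linearCombination K v).exists_leftInverse_of_injective
    (LinearMap.ker_eq_bot.2 hv)
  have hgv : ∀ i, g (v i) = Finsupp.single i 1 := fun i => by
    simpa using LinearMap.congr_fun hg (Finsupp.single i 1)
  exact ⟨Finsupp.linearCombination K w ∘ₗ g, fun i => by simp [hgv]⟩

theorem AddMonoidHom.exists_comp_eq_of_surjective {P B C : Type*} [AddCommGroup P]
    [Module.Projective ℤ P] [AddCommGroup B] [AddCommGroup C] (π : B →+ C)
    (hπ : Function.Surjective π) (g : P →+ C) : ∃ f : P →+ B, π.comp f = g := by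
  obtain ⟨f, hf⟩ := Module.projective_lifting_property π.toIntLinearMap g.toIntLinearMap hπ
  exact ⟨f.toAddMonoidHom, congrArg LinearMap.toAddMonoidHom hf⟩

section Solvability

variable {I J : Type*} (m : I → J →₀ ℤ)

def SolvableIn (A : Type*) [AddCommGroup A] : Prop :=
  ∀ a : I → A, ∃ f : (J →₀ ℤ) →+ A, ∀ i, f (m i) = a i

variable {m} {A : Type*} [AddCommGroup A]

theorem solvableIn_of_subsingleton [Subsingleton A] : SolvableIn m A :=
  fun _ => ⟨0, fun _ => Subsingleton.elim _ _⟩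

theorem SolvableIn.of_addSubgroup (H : AddSubgroup A) (hH : SolvableIn m H)
    (hQ : SolvableIn m (A ⧸ H)) : SolvableIn m A := by
  intro a
  obtain ⟨g, hg⟩ := hQ (fun i => a i)
  obtain ⟨f₀, hf₀⟩ := (QuotientAddGroup.mk' H).exists_comp_eq_of_surjective
    (QuotientAddGroup.mk'_surjective H) g
  have hdefect : ∀ i, f₀ (m i) - a i ∈ H := fun i => by
    rw [← QuotientAddGroup.eq_zero_iff, QuotientAddGroup.mk_sub, ← hg i, ← hf₀]
    exact sub_self _
  obtain ⟨h, hh⟩ := hH (fun i => ⟨_, hdefect i⟩)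
  exact ⟨f₀ - H.subtype.comp h, fun i => by simp [hh i]⟩

variable {p : ℕ} [Fact p.Prime]

theorem solvableIn_of_nsmul_eq_zero (hli : LinearIndependent (ZMod p) (fun i => modRed p (m i)))
    (hA : ∀ a : A, p • a = 0) : SolvableIn m A := by
  let : Module (ZMod p) A := AddCommGroup.zmodModule hA
  intro a
  obtain ⟨g, hg⟩ := hli.exists_linearMap_apply_eq a
  exact ⟨g.toAddMonoidHom.comp (Finsupp.mapRange.addMonoidHom (Int.castAddHom _)), hg⟩

theorem solvableIn_of_pow_nsmul_eq_zero
    (hli : LinearIndependent (ZMod p) (fun i => modRed p (m i))) (n : ℕ) :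
    ∀ {A : Type*} [AddCommGroup A], (∀ a : A, p ^ n • a = 0) → SolvableIn m A := by
  induction n with
  | zero =>
    intro A _ hA
    have : Subsingleton A := ⟨fun x y => by simpa using (hA x).trans (hA y).symm⟩
    exact solvableIn_of_subsingleton
  | succ n ih =>
    intro A _ hA
    let H := (nsmulAddMonoidHom p : A →+ A).ker
    refine .of_addSubgroup H (solvableIn_of_nsmul_eq_zero hli fun x => Subtype.ext x.2) (ih ?_)
    intro q
    induction q using QuotientAddGroup.induction_on with
    | H x =>
      rw [← QuotientAddGroup.mk_nsmul, QuotientAddGroup.eq_zero_iff, AddMonoidHom.mem_ker,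
        nsmulAddMonoidHom_apply, ← mul_nsmul', ← pow_succ']
      exact hA x

end Solvability

theorem p_nonsingular_solvable_exponent_p_pow_general {p : ℕ} (hp : p.Prime)
    (n : ℕ)
    {A : Type*} [AddCommGroup A] (hA : ∀ a : A, p ^ n • a = 0)
    {I J : Type*} (m : I → (J →₀ ℤ))
    (hli : LinearIndependent (ZMod p) (fun i => modRed p (m i)))
    (a : I → A) :
    ∃ f : (J →₀ ℤ) →+ A, ∀ i, f (m i) = a i :=
  haveI := Fact.mk hp
  solvableIn_of_pow_nsmul_eq_zero hli n hA a

/-- Every p-nonsingular system of equations over an abelian p-group of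
bounded period p^n is solvable in the group itself. -/
theorem p_nonsingular_solvable_exponent_p_pow {p : ℕ} (hp : p.Prime)
    (n : ℕ) (hn : 1 ≤ n)
    {A : Type*} [AddCommGroup A] (hA : ∀ a : A, p ^ n • a = 0)
    {I J : Type*} (m : I → (J →₀ ℤ))
    (hli : LinearIndependent (ZMod p) (fun i => modRed p (m i)))
    (a : I → A) :
    ∃ f : (J →₀ ℤ) →+ A, ∀ i, f (m i) = a i :=
  p_nonsingular_solvable_exponent_p_pow_general hp n hA m hli a
end

section
/- Let A be a periodic (torsion) abelian group. Then every unimodular system of equations over A is solvable in A itself if and only if the reduced part of A has bounded exponent. Precisely: writing A = C ⊕ D with D divisible and C reduced, the following are equivalent: (1) for every family {m_i} in a free abelian group M = ⊕_j ℤ·x_j whose mod-q reductions are ℤ/q-independent for all primes q, and every family {a_i} in A, there is a homomorphism f : M → A with f(m_i) = a_i for all i; (2) there exists N ≥ 1 with N·c = 0 for all c ∈ C. -/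
def IsUnimodular {ι J : Type*} (m : ι → (J →₀ ℤ)) : Prop :=
  ∀ q : ℕ, q.Prime → LinearIndependent (ZMod q) fun i => modRed q (m i)

section ModRed

variable (q : ℕ) {ι J : Type*}

noncomputable def modRedHom : (J →₀ ℤ) →+ (J →₀ ZMod q) :=
  Finsupp.mapRange.addMonoidHom (Int.castAddHom (ZMod q))

@[simp]
lemma modRedHom_apply (v : J →₀ ℤ) : modRedHom q v = modRed q v := rfl

@[simp]
lemma modRed_apply (v : J →₀ ℤ) (j : J) : modRed q v j = (v j : ZMod q) :=
  Finsupp.mapRange_apply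

@[simp]
lemma modRed_single (j : J) (z : ℤ) :
    modRed q (Finsupp.single j z) = Finsupp.single j (z : ZMod q) :=
  Finsupp.mapRange_single

@[simp]
lemma modRed_sub (v w : J →₀ ℤ) : modRed q (v - w) = modRed q v - modRed q w :=
  map_sub (modRedHom q) v w

lemma modRed_linearCombination (m : ι → (J →₀ ℤ)) (l : ι →₀ ℤ) :
    modRed q (Finsupp.linearCombination ℤ m l) =
      Finsupp.linearCombination (ZMod q) (fun i => modRed q (m i)) (modRed q l) := by
  have : (modRedHom q).comp (Finsupp.linearCombination ℤ m).toAddMonoidHom =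
      (Finsupp.linearCombination (ZMod q) (fun i => modRed q (m i))).toAddMonoidHom.comp
        (modRedHom q) := by
    refine Finsupp.addHom_ext' fun i => AddMonoidHom.ext_int ?_
    simp
  exact DFunLike.congr_fun this l

lemma exists_eq_smul_of_modRed_eq_zero {v : J →₀ ℤ} (hv : modRed q v = 0) :
    ∃ w : J →₀ ℤ, v = (q : ℤ) • w := by
  have hdvd (j : J) : (q : ℤ) ∣ v j := by
    simpa [ZMod.intCast_zmod_eq_zero_iff_dvd] using DFunLike.congr_fun hv j
  refine ⟨Finsupp.mapRange (· / (q : ℤ)) (Int.zero_ediv _) v, Finsupp.ext fun j => ?_⟩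
  simp [Int.mul_ediv_cancel' (hdvd j)]

lemma exists_modRed_lift (L : (J →₀ ZMod q) →+ (ι →₀ ZMod q)) :
    ∃ Ψ : (J →₀ ℤ) →ₗ[ℤ] (ι →₀ ℤ), ∀ x, modRed q (Ψ x) = L (modRed q x) := by
  let lift : (ι →₀ ZMod q) → (ι →₀ ℤ) :=
    Finsupp.mapRange (fun z : ZMod q => (z.cast : ℤ)) (by simp)
  refine ⟨Finsupp.linearCombination ℤ fun j => lift (L (Finsupp.single j 1)), fun x => ?_⟩
  have : (modRedHom q).comp
      (Finsupp.linearCombination ℤ fun j => lift (L (Finsupp.single j 1))).toAddMonoidHom =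
      L.comp (modRedHom q) := by
    refine Finsupp.addHom_ext' fun j => AddMonoidHom.ext_int ?_
    ext i
    simp [lift]
  exact DFunLike.congr_fun this x

end ModRed

section LeftInverseModulo

variable {R P Q : Type*} [CommRing R] [AddCommGroup P] [Module R P] [AddCommGroup Q] [Module R Q]

def IsLeftInverseModulo (M : P →ₗ[R] Q) (Ψ : Q →ₗ[R] P) (r : R) : Prop :=
  ∀ x, ∃ y, x - Ψ (M x) = r • y

lemma IsLeftInverseModulo.mul {M : P →ₗ[R] Q} {Ψa Ψb : Q →ₗ[R] P} {a b : R}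
    (ha : IsLeftInverseModulo M Ψa a) (hb : IsLeftInverseModulo M Ψb b) :
    IsLeftInverseModulo M (Ψa + Ψb - Ψa ∘ₗ M ∘ₗ Ψb) (a * b) := by
  intro x
  obtain ⟨y, hy⟩ := hb x
  obtain ⟨z, hz⟩ := ha y
  refine ⟨z, ?_⟩
  -- `1 - (Ψa + Ψb - Ψa M Ψb) M = (1 - Ψa M) (1 - Ψb M)`
  calc x - (Ψa + Ψb - Ψa ∘ₗ M ∘ₗ Ψb) (M x) = x - Ψb (M x) - Ψa (M (x - Ψb (M x))) := by
        simp only [LinearMap.sub_apply, LinearMap.add_apply, LinearMap.comp_apply, map_sub]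
        abel
    _ = (a * b) • z := by rw [hy, map_smul, map_smul, ← smul_sub, hz, mul_comm, mul_smul]

end LeftInverseModulo

section Unimodular

variable {ι J : Type*} {m : ι → (J →₀ ℤ)}

lemma IsUnimodular.exists_isLeftInverseModulo_prime (hm : IsUnimodular m) {p : ℕ}
    (hp : p.Prime) :
    ∃ Ψ, IsLeftInverseModulo (Finsupp.linearCombination ℤ m) Ψ (p : ℤ) := by
  have := Fact.mk hp
  obtain ⟨L, hL⟩ := LinearMap.exists_leftInverse_of_injective _
    (LinearMap.ker_eq_bot.mpr (hm p hp))
  obtain ⟨Ψ, hΨ⟩ := exists_modRed_lift p L.toAddMonoidHom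
  refine ⟨Ψ, fun x => exists_eq_smul_of_modRed_eq_zero p ?_⟩
  have hLx := DFunLike.congr_fun hL (modRed p x)
  simp only [LinearMap.comp_apply, LinearMap.id_apply] at hLx
  rw [modRed_sub, hΨ, LinearMap.toAddMonoidHom_coe, modRed_linearCombination, hLx, sub_self]

lemma IsUnimodular.exists_isLeftInverseModulo (hm : IsUnimodular m) {N : ℕ} (hN : N ≠ 0) :
    ∃ Ψ, IsLeftInverseModulo (Finsupp.linearCombination ℤ m) Ψ (N : ℤ) := by
  induction N using Nat.recOnMul with
  | zero => exact absurd rfl hN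
  | one => exact ⟨0, fun x => ⟨x, by simp⟩⟩
  | prime p hp => exact hm.exists_isLeftInverseModulo_prime hp
  | mul a b iha ihb =>
    obtain ⟨Ψa, ha⟩ := iha (left_ne_zero_of_mul hN)
    obtain ⟨Ψb, hb⟩ := ihb (right_ne_zero_of_mul hN)
    exact ⟨_, by simpa using ha.mul hb⟩

lemma IsUnimodular.linearIndependent (hm : IsUnimodular m) : LinearIndependent ℤ m := by
  refine LinearMap.ker_eq_bot.mp (LinearMap.ker_eq_bot'.mpr fun x hx => Finsupp.ext fun i => ?_)
  obtain ⟨Ψ, hΨ⟩ := hm.exists_isLeftInverseModulo (Nat.succ_ne_zero (x i).natAbs)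
  obtain ⟨y, hy⟩ := hΨ x
  rw [hx, map_zero, sub_zero] at hy
  refine Int.eq_zero_of_abs_lt_dvd ⟨y i, DFunLike.congr_fun hy i⟩ ?_
  push_cast
  omega

end Unimodular

def SolvesUnimodular (G : Type*) [AddCommGroup G] : Prop :=
  ∀ (ι J : Type) (m : ι → (J →₀ ℤ)), IsUnimodular m →
    ∀ a : ι → G, ∃ f : (J →₀ ℤ) →+ G, ∀ i, f (m i) = a i

section Solvability

variable {G : Type*} [AddCommGroup G]

lemma solvesUnimodular_of_nsmul_eq_zero {N : ℕ} (hN : N ≠ 0) (hG : ∀ g : G, N • g = 0) :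
    SolvesUnimodular G := by
  intro ι J m hm a
  obtain ⟨Ψ, hΨ⟩ := hm.exists_isLeftInverseModulo hN
  refine ⟨(Finsupp.linearCombination ℤ a ∘ₗ Ψ).toAddMonoidHom, fun i => ?_⟩
  obtain ⟨y, hy⟩ := hΨ (Finsupp.single i 1)
  rw [Finsupp.linearCombination_single, one_smul] at hy
  have hΨm : Ψ (m i) = Finsupp.single i 1 - (N : ℤ) • y := by rw [← hy]; abel
  simp [hΨm, hG]

lemma solvesUnimodular_of_divisibleBy [DivisibleBy G ℤ] : SolvesUnimodular G := by
  intro ι J m hm a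
  obtain ⟨f, hf⟩ := (Module.Baer.of_divisible G).extension_property_addMonoidHom
    (Finsupp.linearCombination ℤ m).toAddMonoidHom hm.linearIndependent
    (Finsupp.linearCombination ℤ a).toAddMonoidHom
  refine ⟨f, fun i => ?_⟩
  simpa using DFunLike.congr_fun hf (Finsupp.single i 1)

lemma SolvesUnimodular.of_sup {C D : AddSubgroup G} (hsup : C ⊔ D = ⊤)
    (hC : SolvesUnimodular C) (hD : SolvesUnimodular D) : SolvesUnimodular G := by
  intro ι J m hm a
  have hdec (i : ι) : ∃ c : C, ∃ d : D, (c : G) + d = a i := by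
    obtain ⟨c, hc, d, hd, h⟩ := AddSubgroup.mem_sup.mp (hsup ▸ AddSubgroup.mem_top (a i))
    exact ⟨⟨c, hc⟩, ⟨d, hd⟩, h⟩
  choose c d hcd using hdec
  obtain ⟨fC, hfC⟩ := hC ι J m hm c
  obtain ⟨fD, hfD⟩ := hD ι J m hm d
  exact ⟨C.subtype.comp fC + D.subtype.comp fD, fun i => by simp [hfC, hfD, hcd]⟩

end Solvability

lemma linearIndependent_single_sub_single_succ {R : Type*} [CommRing R] (c : ℕ → R) :
    LinearIndependent R
      fun k => (Finsupp.single k 1 - Finsupp.single (k + 1) (c k) : ℕ →₀ R) := by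
  rw [linearIndependent_iff]
  intro l hl
  have h0 := DFunLike.congr_fun hl 0
  have hsucc (j : ℕ) := DFunLike.congr_fun hl (j + 1)
  simp only [Finsupp.linearCombination_apply, Finsupp.sum_apply, Finsupp.coe_smul,
    Finsupp.coe_sub, Pi.smul_apply, Pi.sub_apply, Finsupp.single_apply, smul_eq_mul, mul_sub,
    mul_ite, mul_one, mul_zero, Finsupp.sum_sub, Finsupp.sum_ite_self_eq', Finsupp.coe_zero,
    Pi.zero_apply] at h0 hsucc
  ext k
  induction k with
  | zero => simpa using h0
  | succ k ih => simpa [ih] using hsucc k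

lemma isUnimodular_single_sub_single_succ (n : ℕ → ℤ) :
    IsUnimodular fun k => Finsupp.single k 1 - Finsupp.single (k + 1) (n k) := fun q _ => by
  simpa using linearIndependent_single_sub_single_succ fun k => (n k : ZMod q)

def ChainSolvable (G : Type*) [AddCommGroup G] : Prop :=
  ∀ (n : ℕ → ℕ) (a : ℕ → G), ∃ y : ℕ → G, ∀ k, y k = a k + n k • y (k + 1)

lemma SolvesUnimodular.chainSolvable {G : Type*} [AddCommGroup G] (hG : SolvesUnimodular G) :
    ChainSolvable G := by
  intro n a
  obtain ⟨f, hf⟩ := hG ℕ ℕ _ (isUnimodular_single_sub_single_succ fun k => n k) a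
  refine ⟨fun k => f (Finsupp.single k 1), fun k => ?_⟩
  rw [← hf k, map_sub, ← natCast_zsmul, ← map_zsmul, Finsupp.smul_single, smul_eq_mul, mul_one]
  abel

lemma ChainSolvable.of_retraction {G H : Type*} [AddCommGroup G] [AddCommGroup H]
    (hG : ChainSolvable G) (π : G →+ H) (σ : H →+ G) (hπσ : ∀ h, π (σ h) = h) :
    ChainSolvable H := by
  intro n a
  obtain ⟨y, hy⟩ := hG n (σ ∘ a)
  exact ⟨π ∘ y, fun k => by simp [hy k, hπσ]⟩

def AddCommGroup.IsReduced (G : Type*) [AddCommGroup G] : Prop :=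
  ∀ B : AddSubgroup G, (∀ b ∈ B, ∀ n : ℕ, 0 < n → ∃ c ∈ B, n • c = b) → B = ⊥

namespace AddCommGroup.IsReduced

variable {G : Type*} [AddCommGroup G]

lemma nsmul_eq_zero_of_forall_exists (hred : IsReduced G) (htors : IsAddTorsion G) {L : ℕ}
    (hL : ∀ a : G, ∀ n : ℕ, 0 < n → n • a = 0 → ∃ c, (n * L) • c = L • a) (g : G) :
    L • g = 0 := by
  -- `L • G` is divisible: divide `L • a` by `k` through the hypothesis for `n = k * addOrderOf a`.
  have hdiv : ∀ b ∈ (nsmulAddMonoidHom L : G →+ G).range, ∀ k : ℕ, 0 < k →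
      ∃ c ∈ (nsmulAddMonoidHom L : G →+ G).range, k • c = b := by
    rintro _ ⟨a, rfl⟩ k hk
    obtain ⟨c, hc⟩ := hL a (k * addOrderOf a) (Nat.mul_pos hk (htors a).addOrderOf_pos)
      (by rw [mul_smul, addOrderOf_nsmul_eq_zero, smul_zero])
    refine ⟨L • addOrderOf a • c, ⟨addOrderOf a • c, rfl⟩, ?_⟩
    rw [nsmulAddMonoidHom_apply, ← hc, ← mul_smul, ← mul_smul]
    ring_nf
  have hmem : L • g ∈ (nsmulAddMonoidHom L : G →+ G).range := ⟨g, rfl⟩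
  rwa [hred _ hdiv, AddSubgroup.mem_bot] at hmem

open Nat in
lemma exists_nsmul_eq_zero_of_chainSolvable (hred : IsReduced G) (htors : IsAddTorsion G)
    (hchain : ChainSolvable G) : ∃ N : ℕ, 1 ≤ N ∧ ∀ g : G, N • g = 0 := by
  by_contra! hunbdd
  have hwit (L : ℕ) (hL : 0 < L) :
      ∃ a : G, ∃ n : ℕ, 0 < n ∧ n • a = 0 ∧ ∀ c, (n * L) • c ≠ L • a := by
    by_contra! h
    obtain ⟨g, hg⟩ := hunbdd L hL
    exact hg (hred.nsmul_eq_zero_of_forall_exists htors h g)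
  choose! a n hn_pos hna hnot using hwit
  -- Step `k` of the chain uses the witness for `k ! * Q k ^ 2`, where `Q k = ∏_{i<k} n_i`.
  let Q : ℕ → ℕ := fun k => Nat.rec 1 (fun k q => q * n (k ! * q ^ 2)) k
  have hQ_succ (k : ℕ) : Q (k + 1) = Q k * n (k ! * Q k ^ 2) := rfl
  have hQ_pos (k : ℕ) : 0 < Q k := by
    induction k with
    | zero => exact Nat.one_pos
    | succ k ih => exact hQ_succ k ▸ Nat.mul_pos ih (hn_pos _ (by positivity))
  have hL_pos (k : ℕ) : 0 < k ! * Q k ^ 2 := by have := hQ_pos k; positivity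
  obtain ⟨y, hy⟩ := hchain (fun k => n (k ! * Q k ^ 2)) (fun k => a (k ! * Q k ^ 2))
  have hQy (k : ℕ) : Q k • y 0 = Q k ^ 2 • y k := by
    induction k with
    | zero => simp [Q]
    | succ k ih =>
      rw [hQ_succ, mul_comm, mul_smul, ih, hy k, smul_add, smul_add,
        smul_comm (n _) (Q k ^ 2) (a _), hna _ (hL_pos k), smul_zero, zero_add, ← mul_smul,
        ← mul_smul]
      congr 1
      ring
  -- With `M` the order of `y 0`, step `M` of the chain contradicts the choice of its witness.
  set M := addOrderOf (y 0)
  have hMy : M • y 0 = 0 := addOrderOf_nsmul_eq_zero _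
  obtain ⟨t, ht⟩ := Nat.dvd_factorial (htors (y 0)).addOrderOf_pos le_rfl
  have hLy : (M ! * Q M ^ 2) • y M = 0 := by
    rw [ht, mul_comm M t, mul_assoc, mul_smul, mul_smul, ← hQy, smul_comm M (Q M), hMy,
      smul_zero, smul_zero]
  apply hnot _ (hL_pos M) (-y (M + 1))
  rw [eq_sub_of_add_eq (hy M).symm, smul_sub, hLy, zero_sub, smul_neg, ← mul_smul, mul_comm]

end AddCommGroup.IsReduced

/-- A periodic abelian group `A = C ⊕ D` (`D` divisible, `C` reduced) contains
solutions of all unimodular systems of equations over itself if and only if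
its reduced part `C` has bounded period. -/
theorem periodic_abelian_unimodular_criterion
    {A : Type*} [AddCommGroup A]
    (htors : ∀ a : A, ∃ n : ℕ, 0 < n ∧ n • a = 0)
    (C D : AddSubgroup A) (hinf : C ⊓ D = ⊥) (hsup : C ⊔ D = ⊤)
    (hDdiv : ∀ d ∈ D, ∀ n : ℕ, 0 < n → ∃ e ∈ D, n • e = d)
    (hCred : ∀ B : AddSubgroup C,
      (∀ b ∈ B, ∀ n : ℕ, 0 < n → ∃ c ∈ B, n • c = b) → B = ⊥) :
    (∀ (ι J : Type) (m : ι → (J →₀ ℤ)),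
        (∀ q : ℕ, q.Prime →
          LinearIndependent (ZMod q) (fun i => modRed q (m i))) →
        ∀ a : ι → A, ∃ f : (J →₀ ℤ) →+ A, ∀ i, f (m i) = a i) ↔
      ∃ N : ℕ, 1 ≤ N ∧ ∀ c ∈ C, N • c = 0 := by
  constructor
  · intro hsolv
    have hcompl : IsCompl C.toIntSubmodule D.toIntSubmodule :=
      AddSubgroup.toIntSubmodule.isCompl (IsCompl.of_eq hinf hsup)
    have hchain : ChainSolvable C :=
      (SolvesUnimodular.chainSolvable hsolv).of_retraction
        (C.toIntSubmodule.projectionOnto _ hcompl).toAddMonoidHom C.subtype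
        (C.toIntSubmodule.projectionOnto_apply_left hcompl)
    have htorsC : IsAddTorsion C := fun c => isOfFinAddOrder_iff_nsmul_eq_zero.mpr <|
      (htors c).imp fun _ ⟨hn, hnc⟩ => ⟨hn, Subtype.ext hnc⟩
    obtain ⟨N, hN, hNC⟩ :=
      AddCommGroup.IsReduced.exists_nsmul_eq_zero_of_chainSolvable hCred htorsC hchain
    exact ⟨N, hN, fun c hc => congrArg Subtype.val (hNC ⟨c, hc⟩)⟩
  · rintro ⟨N, hN, hNC⟩
    let : DivisibleBy D ℕ := divisibleByOfSMulRightSurj D ℕ fun {n} hn d => by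
      obtain ⟨e, he, hed⟩ := hDdiv d d.2 n (Nat.pos_of_ne_zero hn)
      exact ⟨⟨e, he⟩, Subtype.ext hed⟩
    let := AddGroup.divisibleByIntOfDivisibleByNat D
    exact SolvesUnimodular.of_sup hsup
      (solvesUnimodular_of_nsmul_eq_zero (Nat.one_le_iff_ne_zero.mp hN)
        fun c => Subtype.ext (hNC c c.2))
      solvesUnimodular_of_divisibleBy
end
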